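/- Let $\lambda_1,\ldots,\lambda_m \in \mathrm{Hom}_{\mathbb{R}}(\mathbb{R}^n,\mathbb{C})$ be distinct, let $M$ be a smooth compact manifold, and let $\beta_1,\ldots,\beta_m \in C^\infty(M)$. Then there exists a smooth compactly supported function $F$ on $M \times \mathbb{R}^n$ such that for each $j$ and each $p \in M$, $\int_{\mathbb{R}^n} F(p,x)\, e^{i\lambda_j(x)}\, dx = \beta_j(p)$. -/

import Mathlib

/-!
It suffices to find test functions `gⱼ` on `ℝⁿ` with `∫ gⱼ x e^{iλₖ(x)} dx = δⱼₖ`, and then to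
take `F (p, x) = ∑ⱼ βⱼ(p) gⱼ(x)`. Such `gⱼ` exist because the linear map
`f ↦ (∫ f x e^{iλₖ(x)} dx)ₖ` from test functions to `ℂᵐ` is onto: a functional `c` vanishing on
its range makes `∑ₖ cₖ e^{iλₖ}` a continuous function orthogonal to every test function, hence
zero, and the characters `x ↦ e^{iλₖ(x)}` are distinct, hence linearly independent by Dedekind's
lemma, so `c = 0`.
-/

open MeasureTheory Complex Function TopologicalSpace
open scoped ContDiff Distributions Manifold

theorem LinearMap.eq_of_cexp_I_mul_eq {E : Type*} [AddCommGroup E] [Module ℝ E]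
    {L L' : E →ₗ[ℝ] ℂ} (h : ∀ x, cexp (I * L x) = cexp (I * L' x)) : L = L' := by
  ext x
  -- both sides are the derivative at `0` of the same function `s ↦ exp (i L (s • x))`
  have hderiv (a : ℂ) : HasDerivAt (fun s : ℝ => cexp (s * a)) a 0 := by
    simpa using (((hasDerivAt_id (0 : ℂ)).mul_const a).cexp).comp_ofReal
  have hfun : (fun s : ℝ => cexp (s * (I * L x))) = fun s : ℝ => cexp (s * (I * L' x)) := by
    funext s
    simpa only [map_smul, real_smul, mul_left_comm] using h (s • x)
  exact mul_left_cancel₀ I_ne_zero ((hderiv _).unique (hfun ▸ hderiv _))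

noncomputable def LinearMap.cexpIMulChar {E : Type*} [AddCommGroup E] [Module ℝ E]
    (L : E →ₗ[ℝ] ℂ) : Multiplicative E →* ℂ where
  toFun x := cexp (I * L x.toAdd)
  map_one' := by simp
  map_mul' x y := by simp only [toAdd_mul, map_add, mul_add, exp_add]

theorem linearIndependent_cexp_I_mul {E ι : Type*} [AddCommGroup E] [Module ℝ E]
    {Λ : ι → E →ₗ[ℝ] ℂ} (hΛ : Injective Λ) :
    LinearIndependent ℂ fun k (x : E) => cexp (I * Λ k x) := by
  have hχ : Injective fun k => (Λ k).cexpIMulChar := fun k l hkl =>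
    hΛ <| LinearMap.eq_of_cexp_I_mul_eq fun x => DFunLike.congr_fun hkl (.ofAdd x)
  exact (linearIndependent_monoidHom (Multiplicative E) ℂ).comp _ hχ

theorem Continuous.eq_zero_of_integral_contDiff_smul_eq_zero {E F : Type*}
    [NormedAddCommGroup E] [NormedSpace ℝ E] [FiniteDimensional ℝ E] [MeasurableSpace E]
    [BorelSpace E] [NormedAddCommGroup F] [NormedSpace ℝ F] [CompleteSpace F] {μ : Measure E}
    [IsLocallyFiniteMeasure μ] [μ.IsOpenPosMeasure] {f : E → F} (hf : Continuous f)
    (h : ∀ g : E → ℝ, ContDiff ℝ ∞ g → HasCompactSupport g → ∫ x, g x • f x ∂μ = 0) :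
    f = 0 :=
  (hf.ae_eq_iff_eq μ continuous_zero).1 <|
    ae_eq_zero_of_integral_contDiff_smul_eq_zero hf.locallyIntegrable h

theorem HasCompactSupport.finsetSum {X M ι : Type*} [TopologicalSpace X] [AddCommMonoid M]
    {s : Finset ι} {f : ι → X → M} (hf : ∀ i ∈ s, HasCompactSupport (f i)) :
    HasCompactSupport fun x => ∑ i ∈ s, f i x := by
  simpa only [← Finset.sum_fn] using
    Finset.sum_induction f HasCompactSupport (fun _ _ => .add) .zero hf

theorem HasCompactSupport.comp_snd {X Y M : Type*} [TopologicalSpace X] [CompactSpace X]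
    [TopologicalSpace Y] [Zero M] {g : Y → M} (hg : HasCompactSupport g) :
    HasCompactSupport fun q : X × Y => g q.2 :=
  (isCompact_univ.prod hg).of_isClosed_subset (isClosed_tsupport _) <|
    closure_minimal (fun _ hq => ⟨trivial, subset_tsupport g hq⟩)
      (isClosed_univ.prod (isClosed_tsupport g))

section FourierLaplace

variable {E ι : Type*} [NormedAddCommGroup E] [NormedSpace ℝ E] [FiniteDimensional ℝ E]
  [MeasurableSpace E] [BorelSpace E] {μ : Measure E}

omit [MeasurableSpace E] [BorelSpace E] in
theorem LinearMap.continuous_cexp_I_mul (L : E →ₗ[ℝ] ℂ) : Continuous fun x => cexp (I * L x) := by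
  have := L.continuous_of_finiteDimensional
  fun_prop

theorem HasCompactSupport.integrable_mul_cexp_I_mul [IsFiniteMeasureOnCompacts μ] {f : E → ℂ}
    (hf : Continuous f) (hsupp : HasCompactSupport f) (L : E →ₗ[ℝ] ℂ) :
    Integrable (fun x => f x * cexp (I * L x)) μ :=
  (hf.mul L.continuous_cexp_I_mul).integrable_of_hasCompactSupport hsupp.mul_right

variable (μ) in
/-- The Fourier–Laplace transform `f^*(Λ k) = ∫ f x * exp (i Λ k x) dμ` of a test function at
the points `Λ k`. -/
noncomputable def fourierLaplaceAtCLM (Λ : ι → E →ₗ[ℝ] ℂ) : 𝓓((⊤ : Opens E), ℂ) →L[ℂ] ι → ℂ :=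
  .pi fun k => TestFunction.integralAgainstBilinCLM (.mul ℂ ℂ) μ fun x => cexp (I * Λ k x)

theorem fourierLaplaceAtCLM_apply [IsLocallyFiniteMeasure μ] (Λ : ι → E →ₗ[ℝ] ℂ)
    (f : 𝓓((⊤ : Opens E), ℂ)) (k : ι) :
    fourierLaplaceAtCLM μ Λ f k = ∫ x, f x * cexp (I * Λ k x) ∂μ :=
  TestFunction.integralAgainstBilinCLM_eq_integral
    ((Λ k).continuous_cexp_I_mul.locallyIntegrable.locallyIntegrableOn _)

theorem fourierLaplaceAtCLM_surjective [IsFiniteMeasureOnCompacts μ] [μ.IsOpenPosMeasure]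
    [Finite ι] {Λ : ι → E →ₗ[ℝ] ℂ} (hΛ : Injective Λ) :
    Surjective (fourierLaplaceAtCLM μ Λ) := by
  classical
  have := Fintype.ofFinite ι
  set T : 𝓓((⊤ : Opens E), ℂ) →ₗ[ℂ] ι → ℂ := (fourierLaplaceAtCLM μ Λ).toLinearMap
  change Surjective T
  rw [← LinearMap.dualMap_injective_iff, injective_iff_map_eq_zero]
  intro φ hφ
  set c : ι → ℂ := fun k => φ fun j => if k = j then 1 else 0
  have hφc (v : ι → ℂ) : φ v = ∑ k, v k * c k := φ.pi_apply_eq_sum_univ v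
  have hsum : (fun x => ∑ k, c k * cexp (I * Λ k x)) = 0 := by
    refine Continuous.eq_zero_of_integral_contDiff_smul_eq_zero (μ := μ)
      (continuous_finsetSum _ fun k _ => continuous_const.mul (Λ k).continuous_cexp_I_mul)
      fun g hg hgs => ?_
    let g' : 𝓓((⊤ : Opens E), ℂ) :=
      ⟨fun x => (g x : ℂ), ofRealCLM.contDiff.comp hg, hgs.comp_left ofReal_zero, by simp⟩
    have hint (k : ι) : Integrable (fun x => g' x * cexp (I * Λ k x) * c k) μ :=
      (g'.hasCompactSupport.integrable_mul_cexp_I_mul g'.contDiff.continuous (Λ k)).mul_const _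
    calc ∫ x, g x • ∑ k, c k * cexp (I * Λ k x) ∂μ
        = ∫ x, ∑ k, g' x * cexp (I * Λ k x) * c k ∂μ := by
          congr with x
          simp only [real_smul, Finset.mul_sum]
          exact Finset.sum_congr rfl fun k _ => by rw [show g' x = g x from rfl]; ring
      _ = ∑ k, (∫ x, g' x * cexp (I * Λ k x) ∂μ) * c k := by
          simp_rw [integral_finsetSum _ fun k _ => hint k, integral_mul_const]
      _ = φ (T g') := by simp [hφc, T, fourierLaplaceAtCLM_apply]
      _ = 0 := LinearMap.congr_fun hφ g'
  have hc : c = 0 := funext <| Fintype.linearIndependent_iff.1 (linearIndependent_cexp_I_mul hΛ) c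
    (by ext x; simpa using congrFun hsum x)
  ext v
  simp [hφc, hc]

end FourierLaplace

theorem exists_smooth_function_with_prescribed_fourier_laplace_values_general
    {EM HM : Type*} [NormedAddCommGroup EM] [NormedSpace ℝ EM] [TopologicalSpace HM]
    (IM : ModelWithCorners ℝ EM HM) (M : Type*) [TopologicalSpace M] [ChartedSpace HM M]
    [CompactSpace M]
    {n m : ℕ} (Λ : Fin m → ((Fin n → ℝ) →ₗ[ℝ] ℂ)) (hΛ : Function.Injective Λ)
    (β : Fin m → M → ℂ) (hβ : ∀ j, ContMDiff IM 𝓘(ℝ, ℂ) (⊤ : ℕ∞) (β j)) :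
    ∃ F : M × (Fin n → ℝ) → ℂ,
      ContMDiff (IM.prod 𝓘(ℝ, Fin n → ℝ)) 𝓘(ℝ, ℂ) (⊤ : ℕ∞) F ∧
      HasCompactSupport F ∧
      ∀ (j : Fin m) (p : M),
        (∫ x : Fin n → ℝ, F (p, x) * Complex.exp (Complex.I * Λ j x)) = β j p := by
  choose g hg using fun j => fourierLaplaceAtCLM_surjective (μ := volume) hΛ (Pi.single j 1)
  refine ⟨fun q => ∑ j, β j q.1 * g j q.2, ?_, ?_, fun k p => ?_⟩
  · exact contMDiff_finsetSum fun j _ => contDiff_mul.comp_contMDiff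
      (((hβ j).comp contMDiff_fst).prodMk_space ((g j).contDiff.contMDiff.comp contMDiff_snd))
  · exact .finsetSum fun j _ => (g j).hasCompactSupport.comp_snd.mul_left
  · calc ∫ x, (∑ j, β j p * g j x) * cexp (I * Λ k x)
        = fourierLaplaceAtCLM volume Λ (∑ j, β j p • g j) k := by simp [fourierLaplaceAtCLM_apply]
      _ = β k p := by simp [hg, Pi.single_apply]

/-- For distinct `ℝ`-linear maps `λ₁,…,λₘ : ℝⁿ → ℂ`, a smooth compact
manifold `M`, and smooth functions `β₁,…,βₘ` on `M`, there exists a smooth compactly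
supported function `F` on `M × ℝⁿ` whose Fourier–Laplace transform in the second variable
satisfies `∫ F(p,x) e^{iλⱼ(x)} dx = βⱼ(p)` for every `j` and `p`. -/
theorem exists_smooth_function_with_prescribed_fourier_laplace_values
    {EM HM : Type*} [NormedAddCommGroup EM] [NormedSpace ℝ EM] [TopologicalSpace HM]
    (IM : ModelWithCorners ℝ EM HM) (M : Type*) [TopologicalSpace M] [ChartedSpace HM M]
    [IsManifold IM (⊤ : ℕ∞) M] [CompactSpace M]
    {n m : ℕ} (Λ : Fin m → ((Fin n → ℝ) →ₗ[ℝ] ℂ)) (hΛ : Function.Injective Λ)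
    (β : Fin m → M → ℂ) (hβ : ∀ j, ContMDiff IM 𝓘(ℝ, ℂ) (⊤ : ℕ∞) (β j)) :
    ∃ F : M × (Fin n → ℝ) → ℂ,
      ContMDiff (IM.prod 𝓘(ℝ, Fin n → ℝ)) 𝓘(ℝ, ℂ) (⊤ : ℕ∞) F ∧
      HasCompactSupport F ∧
      ∀ (j : Fin m) (p : M),
        (∫ x : Fin n → ℝ, F (p, x) * Complex.exp (Complex.I * Λ j x)) = β j p :=
  exists_smooth_function_with_prescribed_fourier_laplace_values_general IM M Λ hΛ β hβ
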